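/- arXiv:1304.5924 — 6 statements merged into one kernel-verified Lean document; each statement's English description precedes it below -/
import Mathlib

section
/- Let σ^k_n be defined by σ^0_n = 1 for all n ≥ 1, σ^k_{n+1} = Σ_{i=0}^{k} σ^i_n (mod 2) for 1 ≤ k ≤ n-1, and σ^n_{n+1} = σ^{n-1}_{n+1}. Then σ^k_n ≡ C(n+k, k) (mod 2) for all n ≥ 1 and 0 ≤ k ≤ n-1. -/
/-!
Induction on `n`. Below the top index, the recurrence is a partial sum of the previous row, and
the hockey-stick identity `∑_{i ≤ k} C(n+i, i) = C(n+k+1, k)` turns it into the claimed binomial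
coefficient. At the top index, Pascal's rule gives `C(2n+1, n) = C(2n, n-1) + C(2n, n)`, and the
central binomial coefficient `C(2n, n)` is even, so `σ^n_{n+1} = σ^{n-1}_{n+1}` matches as well.
-/

open Finset

theorem Nat.sum_range_add_choose_self (n k : ℕ) :
    ∑ i ∈ range (k + 1), (n + i).choose i = (n + k + 1).choose k := by
  induction k with
  | zero => simp
  | succ k ih => rw [sum_range_succ, ih, ← add_assoc, Nat.choose_succ_succ' (n + k + 1)]

theorem Nat.choose_two_mul_add_one_self_zmod_two {n : ℕ} (hn : 0 < n) :
    ((2 * n + 1).choose n : ZMod 2) = ((2 * n).choose (n - 1) : ZMod 2) := by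
  obtain ⟨m, rfl⟩ := Nat.exists_eq_add_one_of_ne_zero hn.ne'
  have hcentral : ((2 * (m + 1)).choose (m + 1) : ZMod 2) = 0 := by
    rw [← Nat.centralBinom_eq_two_mul_choose, ZMod.natCast_eq_zero_iff]
    exact Nat.two_dvd_centralBinom_succ m
  rw [Nat.choose_succ_succ', Nat.cast_add, hcentral, add_zero, Nat.add_sub_cancel]

theorem eq_choose_succ_of_eq_choose (σ : ℕ → ℕ → ZMod 2) {n : ℕ}
    (h0 : σ (n + 1) 0 = 1)
    (hrec : ∀ k, 1 ≤ k → k ≤ n - 1 → σ (n + 1) k = ∑ i ∈ range (k + 1), σ n i)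
    (ih : ∀ k ≤ n - 1, σ n k = ((n + k).choose k : ZMod 2)) :
    ∀ k ≤ n - 1, σ (n + 1) k = ((n + 1 + k).choose k : ZMod 2) := by
  intro k hk
  rcases Nat.eq_zero_or_pos k with rfl | hk0
  · simpa using h0
  rw [hrec k hk0 hk, sum_congr rfl fun i hi => ih i (by grind), ← Nat.cast_sum,
    Nat.sum_range_add_choose_self, add_right_comm]

/-- If `σ k n` (written `σ n k` here, values in `ZMod 2`) satisfies
`σ n 0 = 1` for `n ≥ 1`, the recurrence `σ (n+1) k = ∑_{i=0}^k σ n i` for `1 ≤ k ≤ n-1`,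
and `σ (n+1) n = σ (n+1) (n-1)`, then `σ n k ≡ C(n+k, k) (mod 2)` for all `n ≥ 1`, `k ≤ n-1`. -/
theorem stmt0 (σ : ℕ → ℕ → ZMod 2)
    (h0 : ∀ n, 1 ≤ n → σ n 0 = 1)
    (hrec : ∀ n, 1 ≤ n → ∀ k, 1 ≤ k → k ≤ n - 1 →
      σ (n + 1) k = ∑ i ∈ Finset.range (k + 1), σ n i)
    (htop : ∀ n, 1 ≤ n → σ (n + 1) n = σ (n + 1) (n - 1)) :
    ∀ n, 1 ≤ n → ∀ k, k ≤ n - 1 → σ n k = (Nat.choose (n + k) k : ZMod 2) := by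
  intro n hn
  induction n, hn using Nat.le_induction with
  | base =>
    intro k hk
    obtain rfl : k = 0 := by omega
    simpa using h0 1 le_rfl
  | succ n hn ih =>
    have below := eq_choose_succ_of_eq_choose σ (h0 _ (by omega)) (hrec n hn) ih
    intro k hk
    rcases Nat.lt_or_ge k n with hkn | hkn
    · exact below k (by omega)
    obtain rfl : n = k := by omega
    rw [htop n hn, below (n - 1) le_rfl, show n + 1 + (n - 1) = 2 * n by omega,
      show n + 1 + n = 2 * n + 1 by omega, Nat.choose_two_mul_add_one_self_zmod_two hn]
end

section
/- Let R = Z_2[t_1, ..., t_n] / G where G is the ideal generated by t_1^2 and t_j^2 + t_{j-1} t_j for j = 2, ..., n. Then in R, for every i = 1, ..., n one has t_i^i = t_1 t_2 ⋯ t_i, and this element is nonzero, while t_i^{i+1} = 0. -/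
/-! The relation `tⱼ² = tⱼ₋₁tⱼ` gives `tⱼ^(m+2) = tⱼ₋₁^(m+1) tⱼ`, so induction on `i` yields
`tᵢ^i = t₁⋯tᵢ` and, since `t₁² = 0`, `tᵢ^(i+1) = 0`.

For nonvanishing, consider the additive functional summing the coefficients of those monomials
`t^α` whose exponents satisfy the ballot condition `α₁ + ⋯ + αⱼ ≤ j` for all `j`. It kills `G`:
a multiple `m t₁²` is never ballot, and for `j ≥ 2` the monomial `m tⱼ²` is ballot iff
`m tⱼ₋₁tⱼ` is, so the two contributions of `m (tⱼ² + tⱼ₋₁tⱼ)` cancel mod 2. Every squarefree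
monomial is ballot, so it has value `1` and does not lie in `G`. -/

open MvPolynomial

/-- The ideal `G = (t₁², t₂² + t₁t₂, …, tₙ² + tₙ₋₁tₙ)` in `ℤ₂[t₁,…,tₙ]`,
with `tᵢ` represented by `X (i-1) : Fin n`. -/
noncomputable def cubeIdeal (n : ℕ) : Ideal (MvPolynomial (Fin n) (ZMod 2)) :=
  Ideal.span (Set.range fun j : Fin n =>
    X j ^ 2 +
      (if j.val = 0 then 0 else
        X (⟨j.val - 1, lt_of_le_of_lt (Nat.sub_le _ _) j.isLt⟩ : Fin n) * X j))

open Finset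

theorem pow_add_two_eq_of_sq_eq_mul {M : Type*} [CommMonoid M] {a b : M} (h : a ^ 2 = b * a)
    (k : ℕ) : a ^ (k + 2) = b ^ (k + 1) * a := by
  induction k with
  | zero => simpa using h
  | succ k ih =>
    calc a ^ (k + 3) = a ^ (k + 2) * a := pow_succ a (k + 2)
      _ = b ^ (k + 1) * a ^ 2 := by rw [ih, mul_assoc, sq]
      _ = b ^ (k + 2) * a := by rw [h, ← mul_assoc, ← pow_succ]

namespace Fin

theorem Iic_eq_singleton_of_val_eq_zero {n : ℕ} {i : Fin n} (hi : i.val = 0) : Iic i = {i} := by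
  ext j
  simp only [mem_Iic, mem_singleton, Fin.le_def, Fin.ext_iff]
  omega

theorem Iic_eq_insert_Iic_of_val_add_one_eq {n : ℕ} {i k : Fin n} (hk : k.val + 1 = i.val) :
    Iic i = insert i (Iic k) := by
  ext j
  simp only [mem_Iic, mem_insert, Fin.le_def, Fin.ext_iff]
  omega

end Fin

section Chain

variable {M : Type*} [CommMonoidWithZero M] {n : ℕ} {t : Fin n → M}

theorem pow_val_succ_eq_prod_Iic (hsq : ∀ j k : Fin n, k.val + 1 = j.val → t j ^ 2 = t k * t j)
    (i : Fin n) : t i ^ (i.val + 1) = ∏ j ∈ Iic i, t j := by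
  induction hi : i.val generalizing i with
  | zero => rw [Fin.Iic_eq_singleton_of_val_eq_zero hi, prod_singleton, pow_one]
  | succ m ih =>
    let k : Fin n := ⟨m, by omega⟩
    have hk : k.val + 1 = i.val := hi.symm
    rw [pow_add_two_eq_of_sq_eq_mul (hsq i k hk), ih k rfl,
      Fin.Iic_eq_insert_Iic_of_val_add_one_eq hk, prod_insert (by simp [Fin.le_def, k]; omega),
      mul_comm]

theorem pow_val_add_two_eq_zero (h0 : ∀ j : Fin n, j.val = 0 → t j ^ 2 = 0)
    (hsq : ∀ j k : Fin n, k.val + 1 = j.val → t j ^ 2 = t k * t j) (i : Fin n) :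
    t i ^ (i.val + 2) = 0 := by
  induction hi : i.val generalizing i with
  | zero => exact h0 i hi
  | succ m ih =>
    let k : Fin n := ⟨m, by omega⟩
    rw [pow_add_two_eq_of_sq_eq_mul (hsq i k hi.symm), ih k rfl, zero_mul]

end Chain

section Ballot

variable {n : ℕ}

def IsBallot (α : Fin n →₀ ℕ) : Prop := ∀ j, ∑ k ∈ Iic j, α k ≤ j.val + 1

instance (α : Fin n →₀ ℕ) : Decidable (IsBallot α) := by
  unfold IsBallot; infer_instance

theorem sum_Iic_add_single {ι : Type*} [LinearOrder ι] [LocallyFiniteOrderBot ι] (α : ι →₀ ℕ)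
    (j K : ι) (c : ℕ) :
    ∑ k ∈ Iic K, (α + Finsupp.single j c) k = ∑ k ∈ Iic K, α k + if j ≤ K then c else 0 := by
  simp only [Finsupp.add_apply, sum_add_distrib, Finsupp.single_apply, sum_ite_eq, mem_Iic]

theorem isBallot_of_le_one {α : Fin n →₀ ℕ} (h : ∀ k, α k ≤ 1) : IsBallot α := fun j =>
  calc ∑ k ∈ Iic j, α k ≤ #(Iic j) • 1 := sum_le_card_nsmul _ _ _ fun k _ => h k
    _ = j.val + 1 := by simp

theorem not_isBallot_add_single_two {j : Fin n} (hj : j.val = 0) (α : Fin n →₀ ℕ) :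
    ¬IsBallot (α + Finsupp.single j 2) := by
  intro h
  have := h j
  rw [sum_Iic_add_single, if_pos le_rfl, hj] at this
  omega

theorem isBallot_add_single_two_iff {j k : Fin n} (hk : k.val + 1 = j.val) (α : Fin n →₀ ℕ) :
    IsBallot (α + Finsupp.single j 2) ↔
      IsBallot (α + Finsupp.single k 1 + Finsupp.single j 1) := by
  simp only [IsBallot, sum_Iic_add_single, Fin.le_def]
  constructor
  · intro h K
    have hK := h K
    have hj := h j
    have hmono : K.val ≤ j.val → ∑ l ∈ Iic K, α l ≤ ∑ l ∈ Iic j, α l := fun hKj =>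
      sum_le_sum_of_subset (Iic_subset_Iic.mpr (Fin.le_def.mpr hKj))
    split_ifs at * <;> omega
  · intro h K
    have hK := h K
    split_ifs at * <;> omega

end Ballot

section BallotSum

variable {n : ℕ} {R : Type*} [CommSemiring R]

theorem sum_filter_coeff_eq_of_support_subset {σ : Type*} (P : (σ →₀ ℕ) → Prop) [DecidablePred P]
    {p : MvPolynomial σ R} {s : Finset (σ →₀ ℕ)} (h : p.support ⊆ s) :
    ∑ α ∈ p.support with P α, p.coeff α = ∑ α ∈ s with P α, p.coeff α :=
  sum_subset (filter_subset_filter _ h) fun _ _ _ => by simp_all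

noncomputable def ballotSum (n : ℕ) (R : Type*) [CommSemiring R] :
    MvPolynomial (Fin n) R →+ R where
  toFun p := ∑ α ∈ p.support with IsBallot α, p.coeff α
  map_zero' := by simp
  map_add' p q := by
    classical
    rw [sum_filter_coeff_eq_of_support_subset _ support_add,
      sum_filter_coeff_eq_of_support_subset _ (subset_union_left (s₂ := q.support)),
      sum_filter_coeff_eq_of_support_subset _ (subset_union_right (s₁ := p.support)),
      ← sum_add_distrib]
    simp only [coeff_add]

theorem ballotSum_monomial (α : Fin n →₀ ℕ) (c : R) :
    ballotSum n R (monomial α c) = if IsBallot α then c else 0 := by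
  classical
  change ∑ β ∈ _ with _, _ = _
  rw [sum_filter_coeff_eq_of_support_subset _ support_monomial_subset, filter_singleton]
  split_ifs <;> simp

end BallotSum

section CubeIdeal

variable {n : ℕ}

noncomputable def cubeRelation (n : ℕ) (j : Fin n) : MvPolynomial (Fin n) (ZMod 2) :=
  X j ^ 2 +
    (if j.val = 0 then 0 else
      X (⟨j.val - 1, lt_of_le_of_lt (Nat.sub_le _ _) j.isLt⟩ : Fin n) * X j)

theorem cubeIdeal_eq_span : cubeIdeal n = Ideal.span (Set.range (cubeRelation n)) := rfl

theorem cubeRelation_of_val_eq_zero {j : Fin n} (hj : j.val = 0) : cubeRelation n j = X j ^ 2 := by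
  rw [cubeRelation, if_pos hj, add_zero]

theorem cubeRelation_of_val_add_one_eq {j k : Fin n} (hk : k.val + 1 = j.val) :
    cubeRelation n j = X j ^ 2 + X k * X j := by
  rw [cubeRelation, if_neg (by omega), show (⟨j.val - 1, _⟩ : Fin n) = k by ext; simp; omega]

theorem mk_X_sq_of_val_eq_zero {j : Fin n} (hj : j.val = 0) :
    Ideal.Quotient.mk (cubeIdeal n) (X j) ^ 2 = 0 := by
  rw [← map_pow, Ideal.Quotient.eq_zero_iff_mem, ← cubeRelation_of_val_eq_zero hj]
  exact Ideal.subset_span ⟨j, rfl⟩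

theorem mk_X_sq_of_val_add_one_eq {j k : Fin n} (hk : k.val + 1 = j.val) :
    Ideal.Quotient.mk (cubeIdeal n) (X j) ^ 2 =
      Ideal.Quotient.mk (cubeIdeal n) (X k) * Ideal.Quotient.mk (cubeIdeal n) (X j) := by
  rw [← map_pow, ← map_mul, Ideal.Quotient.eq, CharTwo.sub_eq_add,
    ← cubeRelation_of_val_add_one_eq hk]
  exact Ideal.subset_span ⟨j, rfl⟩

theorem ballotSum_mul_cubeRelation (g : MvPolynomial (Fin n) (ZMod 2)) (j : Fin n) :
    ballotSum n (ZMod 2) (g * cubeRelation n j) = 0 := by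
  induction g using MvPolynomial.induction_on' with
  | add p q hp hq => rw [add_mul, map_add, hp, hq, add_zero]
  | monomial α c =>
    obtain hj | ⟨k, hk⟩ : j.val = 0 ∨ ∃ k : Fin n, k.val + 1 = j.val :=
      j.val.eq_zero_or_eq_succ_pred.imp id fun h => ⟨⟨j.val - 1, by omega⟩, by simp; omega⟩
    · rw [cubeRelation_of_val_eq_zero hj, X_pow_eq_monomial, monomial_mul, ballotSum_monomial,
        if_neg (not_isBallot_add_single_two hj α)]
    · rw [cubeRelation_of_val_add_one_eq hk, mul_add, X_pow_eq_monomial, ← mul_assoc]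
      simp only [X, monomial_mul, mul_one, map_add, ballotSum_monomial,
        isBallot_add_single_two_iff hk, CharTwo.add_self_eq_zero]

theorem ballotSum_eq_zero_of_mem_cubeIdeal {p : MvPolynomial (Fin n) (ZMod 2)}
    (hp : p ∈ cubeIdeal n) : ballotSum n (ZMod 2) p = 0 := by
  rw [cubeIdeal_eq_span, Ideal.mem_span_range_iff_exists_fun] at hp
  obtain ⟨c, rfl⟩ := hp
  simp only [map_sum, ballotSum_mul_cubeRelation, sum_const_zero]

theorem prod_X_notMem_cubeIdeal (s : Finset (Fin n)) : ∏ j ∈ s, X j ∉ cubeIdeal n := by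
  have hballot : IsBallot (∑ j ∈ s, Finsupp.single j 1) := isBallot_of_le_one fun k => by
    simp only [Finsupp.finsetSum_apply, Finsupp.single_apply, sum_ite_eq']
    split_ifs <;> omega
  have hmonomial : ∏ j ∈ s, X j = monomial (∑ j ∈ s, Finsupp.single j 1) (1 : ZMod 2) :=
    (monomial_sum_one s _).symm
  intro h
  have := ballotSum_eq_zero_of_mem_cubeIdeal h
  rw [hmonomial, ballotSum_monomial, if_pos hballot] at this
  exact one_ne_zero this

end CubeIdeal

/-- In `R = ℤ₂[t₁,…,tₙ]/G`, for every `i = 1,…,n` (here `i : Fin n`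
represents `t_{i+1}`), one has `tᵢ^i = t₁t₂⋯tᵢ`, this element is nonzero, and
`tᵢ^{i+1} = 0`. -/
theorem stmt3 (n : ℕ) (i : Fin n) :
    Ideal.Quotient.mk (cubeIdeal n) (X i ^ (i.val + 1)) =
      Ideal.Quotient.mk (cubeIdeal n) (∏ j ∈ Finset.Iic i, X j) ∧
    Ideal.Quotient.mk (cubeIdeal n) (X i ^ (i.val + 1)) ≠ 0 ∧
    Ideal.Quotient.mk (cubeIdeal n) (X i ^ (i.val + 2)) = 0 := by
  have hprod : Ideal.Quotient.mk (cubeIdeal n) (X i ^ (i.val + 1)) =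
      Ideal.Quotient.mk (cubeIdeal n) (∏ j ∈ Iic i, X j) := by
    rw [map_pow, map_prod]
    exact pow_val_succ_eq_prod_Iic (fun _ _ => mk_X_sq_of_val_add_one_eq) i
  refine ⟨hprod, ?_, ?_⟩
  · rw [hprod, Ne, Ideal.Quotient.eq_zero_iff_mem]
    exact prod_X_notMem_cubeIdeal _
  · rw [map_pow]
    exact pow_val_add_two_eq_zero (fun _ => mk_X_sq_of_val_eq_zero)
      (fun _ _ => mk_X_sq_of_val_add_one_eq) i
end

section
/- Let R = Z_2[t_1, ..., t_n] / G where G is generated by t_1^2 and t_j^2 + t_{j-1} t_j for j = 2, ..., n. Then the monomial t_1 t_2 ⋯ t_n is nonzero in R. -/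
open MvPolynomial

/-!
It suffices to find a `ℤ₂`-linear functional `L` on `ℤ₂[t₁,…,tₙ]` that vanishes on `G` but not
on `t₁⋯tₙ`. Let `L` be `1` on the monomials `t^a` satisfying the ballot condition
`a₁ + ⋯ + aₖ ≤ k` for all `k`, with equality at `k = n`, and `0` on the others. Then
`L (t^a t₁²) = 0`, as the condition fails at `k = 1`. The monomials `t^a tⱼ²` and `t^a tⱼ₋₁ tⱼ`
have the same prefix sums except at `k = j - 1`, where the second exceeds the first by one; the
condition for the first at `k = j` gives `a₁ + ⋯ + aⱼ₋₁ ≤ j - 2`, so both monomials satisfy the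
condition or neither does, and the two terms of `L (t^a (tⱼ² + tⱼ₋₁ tⱼ))` cancel mod 2.
-/

theorem LinearMap.eq_zero_of_mem_ideal_span {R A M ι : Type*} [CommSemiring R] [CommSemiring A]
    [Algebra R A] [AddCommMonoid M] [Module R M] (b : Module.Basis ι R A) (L : A →ₗ[R] M)
    {s : Set A} (h : ∀ i, ∀ g ∈ s, L (b i * g) = 0) {x : A} (hx : x ∈ Ideal.span s) :
    L x = 0 := by
  suffices ∀ r, L (r * x) = 0 by simpa using this 1
  induction hx using Submodule.span_induction with
  | mem g hg =>
    exact LinearMap.congr_fun (b.ext (f₁ := L ∘ₗ LinearMap.mulRight R g) (f₂ := 0) (h · g hg))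
  | zero => simp
  | add y z _ _ hy hz => intro r; rw [mul_add, map_add, hy, hz, add_zero]
  | smul c y _ hy => intro r; rw [smul_eq_mul, ← mul_assoc, hy]

namespace CubeIdeal

open Finset

variable {n : ℕ}

def prefixSum (a : Fin n →₀ ℕ) (k : ℕ) : ℕ := ∑ j ∈ univ.filter fun j : Fin n => (j : ℕ) < k, a j

def IsBallot (a : Fin n →₀ ℕ) : Prop := (∀ k, prefixSum a k ≤ k) ∧ prefixSum a n = n

@[simp]
lemma prefixSum_add (a b : Fin n →₀ ℕ) (k : ℕ) :
    prefixSum (a + b) k = prefixSum a k + prefixSum b k := by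
  simp [prefixSum, sum_add_distrib]

@[simp]
lemma prefixSum_single (j : Fin n) (v k : ℕ) :
    prefixSum (Finsupp.single j v) k = if (j : ℕ) < k then v else 0 := by
  classical
  simp [prefixSum, Finsupp.single_apply]

lemma prefixSum_mono (a : Fin n →₀ ℕ) {k m : ℕ} (h : k ≤ m) : prefixSum a k ≤ prefixSum a m :=
  sum_le_sum_of_subset fun j hj => by
    simp only [mem_filter, mem_univ, true_and] at hj ⊢
    omega

lemma not_isBallot_add_single_two {j : Fin n} (hj : (j : ℕ) = 0) (a : Fin n →₀ ℕ) :
    ¬ IsBallot (a + Finsupp.single j 2) := fun hball => by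
  simpa [hj] using hball.1 1

lemma isBallot_add_single_two_iff {j' j : Fin n} (hj : (j' : ℕ) + 1 = j) (a : Fin n →₀ ℕ) :
    IsBallot (a + Finsupp.single j 2) ↔
      IsBallot (a + Finsupp.single j' 1 + Finsupp.single j 1) := by
  set b := a + Finsupp.single j 2
  have hprefix : ∀ k, prefixSum (a + Finsupp.single j' 1 + Finsupp.single j 1) k =
      prefixSum b k + if k = j then 1 else 0 := fun k => by
    simp only [b, prefixSum_add, prefixSum_single]
    split_ifs <;> omega
  have hjump : prefixSum b j + 2 ≤ prefixSum b (j + 1) := by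
    simpa [b] using prefixSum_mono a (Nat.le_succ j)
  simp only [IsBallot, hprefix, if_neg j.isLt.ne']
  refine ⟨fun ⟨hle, htot⟩ => ⟨fun k => ?_, htot⟩, fun ⟨hle, htot⟩ => ⟨fun k => ?_, htot⟩⟩
  · have := hle (j + 1)
    split_ifs with hk
    · subst hk
      omega
    · simpa using hle k
  · have := hle k
    omega

lemma isBallot_sum_single_one : IsBallot (∑ j : Fin n, Finsupp.single j 1) := by
  have hprefix : ∀ k, prefixSum (∑ j : Fin n, Finsupp.single j 1) k = min n k := fun k => by
    classical
    simp [prefixSum, Finsupp.finsetSum_apply, Finsupp.single_apply, Fin.card_filter_val_lt]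
  exact ⟨fun k => by simp [hprefix], by simp [hprefix]⟩

open scoped Classical in
noncomputable def ballotFunctional (n : ℕ) : MvPolynomial (Fin n) (ZMod 2) →ₗ[ZMod 2] ZMod 2 :=
  (basisMonomials (Fin n) (ZMod 2)).constr (ZMod 2) fun a => if IsBallot a then 1 else 0

open scoped Classical in
lemma ballotFunctional_monomial (a : Fin n →₀ ℕ) :
    ballotFunctional n (monomial a 1) = if IsBallot a then 1 else 0 := by
  simpa [ballotFunctional, coe_basisMonomials] using
    (basisMonomials (Fin n) (ZMod 2)).constr_basis (ZMod 2) (fun a => if IsBallot a then 1 else 0) a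

lemma ballotFunctional_eq_zero_of_mem {x : MvPolynomial (Fin n) (ZMod 2)} (hx : x ∈ cubeIdeal n) :
    ballotFunctional n x = 0 := by
  refine LinearMap.eq_zero_of_mem_ideal_span (basisMonomials _ _) _ ?_ hx
  rintro a _ ⟨j, rfl⟩
  simp only [coe_basisMonomials]
  split_ifs with hj
  · rw [add_zero, X_pow_eq_monomial, monomial_mul, one_mul, ballotFunctional_monomial,
      if_neg (not_isBallot_add_single_two hj a)]
  · rw [mul_add, X_pow_eq_monomial, X, X, monomial_mul, monomial_mul, monomial_mul, ← add_assoc,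
      mul_one, one_mul, map_add, ballotFunctional_monomial, ballotFunctional_monomial,
      isBallot_add_single_two_iff, CharTwo.add_self_eq_zero]
    exact Nat.sub_add_cancel (Nat.pos_of_ne_zero hj)

end CubeIdeal

open CubeIdeal in
/-- In `R = ℤ₂[t₁,…,tₙ]/G`, the monomial `t₁t₂⋯tₙ` is nonzero. -/
theorem stmt4 (n : ℕ) :
    Ideal.Quotient.mk (cubeIdeal n) (∏ j : Fin n, X j) ≠ 0 := by
  have hprod : ∏ j : Fin n, X j = monomial (∑ j, Finsupp.single j 1) (1 : ZMod 2) := by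
    simp only [monomial_sum_one, X]
  rw [Ne, Ideal.Quotient.eq_zero_iff_mem, hprod]
  intro hmem
  simpa [ballotFunctional_monomial, isBallot_sum_single_one] using
    ballotFunctional_eq_zero_of_mem hmem
end

section
/- Let R = Z_2[t_1, ..., t_n]/G with G generated by t_1^2 and t_j^2 + t_{j-1}t_j for j = 2,...,n. In R, the element (1 + t_1)(1 + t_2)⋯(1 + t_{n-1}) is a unit, with inverse (1 + t_1)(1 + t_2 + t_2^2)⋯(1 + t_{n-1} + t_{n-1}^2 + ⋯ + t_{n-1}^{n-1}). -/
/-! In `ℤ₂[t₁,…,tₙ]/G` each relation reads `tⱼ² = tⱼ₋₁tⱼ`, hence `tⱼ^(k+1) = tⱼ₋₁^k tⱼ`; by induction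
on `j` this gives `tⱼ^(j+1) = 0`. In characteristic two `1 + t = 1 - t`, whose inverse is the
truncated geometric series `1 + t + ⋯ + t^j` as soon as `t^(j+1) = 0`. -/

open MvPolynomial

section CommRing

variable {R : Type*} [CommRing R]

theorem two_eq_zero_of_zmod_two_algebra [Algebra (ZMod 2) R] : (2 : R) = 0 := by
  rw [← map_ofNat (algebraMap (ZMod 2) R) 2]
  exact (map_zero _ : algebraMap (ZMod 2) R 0 = 0)

theorem one_add_mul_geom_sum_eq_one_of_two_eq_zero (h2 : (2 : R) = 0) {t : R} {m : ℕ}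
    (ht : t ^ m = 0) : (1 + t) * ∑ i ∈ Finset.range m, t ^ i = 1 := by
  have h : 1 + t = 1 - t := by linear_combination h2 * t
  rw [h, mul_neg_geom_sum, ht, sub_zero]

theorem pow_succ_eq_pow_mul_of_sq_eq_mul {a b : R} (h : a ^ 2 = b * a) (k : ℕ) :
    a ^ (k + 1) = b ^ k * a := by
  induction k with
  | zero => simp
  | succ k ih =>
    calc a ^ (k + 2) = a ^ (k + 1) * a := pow_succ a (k + 1)
      _ = b ^ k * a ^ 2 := by rw [ih]; ring
      _ = b ^ (k + 1) * a := by rw [h]; ring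

theorem pow_succ_eq_zero_of_sq_eq_mul {a b : R} {m : ℕ} (h : a ^ 2 = b * a) (hb : b ^ m = 0) :
    a ^ (m + 1) = 0 := by
  rw [pow_succ_eq_pow_mul_of_sq_eq_mul h, hb, zero_mul]

end CommRing

namespace cubeIdeal

variable {n : ℕ}

theorem mk_X_sq (j : Fin n) :
    Ideal.Quotient.mk (cubeIdeal n) (X j) ^ 2 =
      if j.val = 0 then 0 else
        Ideal.Quotient.mk (cubeIdeal n) (X ⟨j.val - 1, by omega⟩ * X j) := by
  have hrel : Ideal.Quotient.mk (cubeIdeal n) (X j ^ 2 +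
      if j.val = 0 then 0 else X ⟨j.val - 1, by omega⟩ * X j) = 0 :=
    Ideal.Quotient.eq_zero_iff_mem.2 (Ideal.subset_span ⟨j, rfl⟩)
  have h2 := two_eq_zero_of_zmod_two_algebra (R := MvPolynomial (Fin n) (ZMod 2) ⧸ cubeIdeal n)
  rw [map_add, map_pow] at hrel
  split_ifs at hrel ⊢
  · simpa using hrel
  · linear_combination hrel - h2 * Ideal.Quotient.mk (cubeIdeal n) (X ⟨j.val - 1, by omega⟩ * X j)

theorem mk_X_pow_eq_zero (j : Fin n) :
    Ideal.Quotient.mk (cubeIdeal n) (X j) ^ (j.val + 2) = 0 := by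
  obtain ⟨j, hj⟩ := j
  induction j with
  | zero => simpa using mk_X_sq ⟨0, hj⟩
  | succ j ih =>
    refine pow_succ_eq_zero_of_sq_eq_mul ?_ (ih (by omega))
    simpa using mk_X_sq ⟨j + 1, hj⟩

end cubeIdeal

/-- `j : Fin (n-1)` stands for the paper's index `j+1`, whose inverse factor is `∑_{s=0}^{j+1} t^s`. -/
theorem stmt5 (n : ℕ) :
    IsUnit (Ideal.Quotient.mk (cubeIdeal n)
      (∏ j : Fin (n - 1), (1 + X (Fin.castLE (Nat.sub_le n 1) j)))) ∧
    (Ideal.Quotient.mk (cubeIdeal n)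
        (∏ j : Fin (n - 1), (1 + X (Fin.castLE (Nat.sub_le n 1) j)))) *
      (Ideal.Quotient.mk (cubeIdeal n)
        (∏ j : Fin (n - 1),
          ∑ s ∈ Finset.range (j.val + 2), X (Fin.castLE (Nat.sub_le n 1) j) ^ s)) = 1 := by
  refine ⟨.of_mul_eq_one _ ?key, ?key⟩
  rw [← map_mul, ← Finset.prod_mul_distrib, map_prod]
  refine Finset.prod_eq_one fun j _ => ?_
  simp only [map_mul, map_add, map_one, map_sum, map_pow]
  exact one_add_mul_geom_sum_eq_one_of_two_eq_zero two_eq_zero_of_zmod_two_algebra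
    (cubeIdeal.mk_X_pow_eq_zero _)
end

section
/- In the ring R = Z_2[u_1,...,u_n]/F, where F is generated by u_1^2 and u_i^2 + u_1 u_i + ⋯ + u_{i-1} u_i for i = 2,...,n, one has u_i^i ≠ 0 and u_i^{i+1} = 0 for every i = 1,...,n. -/
open MvPolynomial

/-- The ideal `F = (u₁², uᵢ² + u₁uᵢ + ⋯ + uᵢ₋₁uᵢ : i = 1,…,n)` in `ℤ₂[u₁,…,uₙ]`;
the `i`-th generator is `(∑_{j ≤ i} uⱼ)·uᵢ` (signs are irrelevant mod 2). -/
noncomputable def uIdeal (n : ℕ) : Ideal (MvPolynomial (Fin n) (ZMod 2)) :=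
  Ideal.span (Set.range fun i : Fin n => (∑ j ∈ Finset.Iic i, X j) * X i)

/-!
Adjoining the last variable `Y = u_{m+1}` presents `ℤ₂[u₁,…,u_{m+1}]/F` as `A[Y]/(Y² + sY)`, where
`A = ℤ₂[u₁,…,u_m]/F` and `s = u₁ + ⋯ + u_m`; this ring is free over `A` with basis `1, Y`.
The relation `(s + Y)Y = 0` gives `(s + Y)^{k+1} = s^k (s + Y)` and `Y^{k+1} = s^k Y`. Hence, by
induction on `m`, `(u₁ + ⋯ + u_m)^m ≠ 0` while `(u₁ + ⋯ + u_m)^{m+1} = 0`, and then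
`u_{m+1}^{m+1} = s^m Y ≠ 0` and `u_{m+1}^{m+2} = s^{m+1} Y = 0`.
-/
theorem pow_succ_eq_pow_mul_of_sq_eq {M : Type*} [CommMonoid M] {y c : M} (h : y ^ 2 = c * y) :
    ∀ k : ℕ, y ^ (k + 1) = c ^ k * y
  | 0 => by simp
  | k + 1 => by
    rw [pow_succ, pow_succ_eq_pow_mul_of_sq_eq h k, mul_assoc, ← sq, h, pow_succ]
    ac_rfl

namespace Polynomial

theorem mem_of_C_add_C_mul_X_mem_map_C_sup_span {A : Type*} [CommRing A] {I : Ideal A}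
    {a p q : A} (h : C p + C q * X ∈ I.map C ⊔ Ideal.span {X ^ 2 + C a * X}) :
    p ∈ I ∧ q ∈ I := by
  simp only [← Ideal.Quotient.eq_zero_iff_mem]
  set φ := mapRingHom (Ideal.Quotient.mk I)
  obtain hI | hI := subsingleton_or_nontrivial (A ⧸ I)
  · exact ⟨Subsingleton.elim _ _, Subsingleton.elim _ _⟩
  have hle : I.map C ⊔ Ideal.span {X ^ 2 + C a * X} ≤
      (Ideal.span {φ (X ^ 2 + C a * X)}).comap φ := by
    refine sup_le ?_ ?_
    · have hker : I.map C = RingHom.ker φ := by rw [ker_mapRingHom, Ideal.mk_ker]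
      exact hker ▸ Ideal.ker_le_comap φ
    · rw [Ideal.span_le, Set.singleton_subset_iff]
      exact Ideal.mem_span_singleton_self _
  have hdvd := Ideal.mem_span_singleton.mp (hle h)
  simp only [φ, coe_mapRingHom, Polynomial.map_add, Polynomial.map_pow, Polynomial.map_mul,
    map_X, map_C] at hdvd
  have hmonic : (X ^ 2 + C (Ideal.Quotient.mk I a) * X).Monic :=
    monic_X_pow_add ((degree_C_mul_X_le _).trans_lt (by norm_num))
  -- modulo `I`, a polynomial of degree `≤ 1` is divisible by a monic quadratic
  have hzero : C (Ideal.Quotient.mk I p) + C (Ideal.Quotient.mk I q) * X = 0 := by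
    by_contra hne
    refine hmonic.not_dvd_of_natDegree_lt hne ?_ hdvd
    have h2 : (X ^ 2 + C (Ideal.Quotient.mk I a) * X).natDegree = 2 := by compute_degree!
    have h1 : (C (Ideal.Quotient.mk I p) + C (Ideal.Quotient.mk I q) * X).natDegree ≤ 1 := by
      compute_degree
    omega
  have h0 := congrArg (coeff · 0) hzero
  have h1 := congrArg (coeff · 1) hzero
  simp only [coeff_add, coeff_C_mul_X, coeff_C] at h0 h1
  simpa using And.intro h0 h1

end Polynomial

section QuadraticRelation

variable {Q : Type*} [CommRing Q] {a y : Q}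

theorem add_pow_succ_of_add_mul_self_eq_zero (h : (a + y) * y = 0) (k : ℕ) :
    (a + y) ^ (k + 1) = a ^ k * (a + y) :=
  pow_succ_eq_pow_mul_of_sq_eq (by linear_combination h) k

theorem pow_succ_of_add_mul_self_eq_zero (h : (a + y) * y = 0) (k : ℕ) :
    y ^ (k + 1) = (-a) ^ k * y :=
  pow_succ_eq_pow_mul_of_sq_eq (by linear_combination h) k

end QuadraticRelation

namespace MvPolynomial

variable (R : Type*) [CommSemiring R] (m : ℕ)

noncomputable def splitLast :
    MvPolynomial (Fin (m + 1)) R →ₐ[R] Polynomial (MvPolynomial (Fin m) R) :=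
  aeval (Fin.lastCases Polynomial.X fun j => Polynomial.C (X j))

variable {R m}

@[simp]
theorem splitLast_X_last : splitLast R m (X (Fin.last m)) = Polynomial.X := by
  simp [splitLast]

@[simp]
theorem splitLast_X_castSucc (j : Fin m) :
    splitLast R m (X j.castSucc) = Polynomial.C (X j) := by
  simp [splitLast]

@[simp]
theorem splitLast_rename_castSucc (p : MvPolynomial (Fin m) R) :
    splitLast R m (rename Fin.castSucc p) = Polynomial.C p := by
  induction p using MvPolynomial.induction_on with
  | C r => simp [Polynomial.C_eq_algebraMap]
  | add p q hp hq => simp [hp, hq]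
  | mul_X p j hp => rw [map_mul, map_mul, rename_X, hp, splitLast_X_castSucc, Polynomial.C_mul]

theorem rename_castSucc_sum_X_Iic (j : Fin m) :
    rename Fin.castSucc (∑ k ∈ Finset.Iic j, X k : MvPolynomial (Fin m) R) =
      ∑ k ∈ Finset.Iic j.castSucc, X k := by
  rw [← Fin.map_castSuccEmb_Iic, Finset.sum_map, map_sum]
  simp only [rename_X, Fin.coe_castSuccEmb]

theorem sum_X_univ_succ :
    (∑ k, X k : MvPolynomial (Fin (m + 1)) R) =
      rename Fin.castSucc (∑ k, X k) + X (Fin.last m) := by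
  rw [Fin.sum_univ_castSucc, map_sum]
  simp only [rename_X]

theorem sum_X_Iic_last :
    (∑ k ∈ Finset.Iic (Fin.last m), X k : MvPolynomial (Fin (m + 1)) R) =
      rename Fin.castSucc (∑ k, X k) + X (Fin.last m) := by
  rw [show Finset.Iic (Fin.last m) = Finset.univ from Finset.Iic_top, sum_X_univ_succ]

@[simp]
theorem splitLast_sum_X :
    splitLast R m (∑ k, X k) = Polynomial.C (∑ k, X k) + Polynomial.X := by
  rw [sum_X_univ_succ, map_add, splitLast_rename_castSucc, splitLast_X_last]

end MvPolynomial

theorem map_rename_castSucc_uIdeal_le (m : ℕ) :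
    (uIdeal m).map (rename Fin.castSucc) ≤ uIdeal (m + 1) := by
  rw [uIdeal, Ideal.map_span, Ideal.span_le]
  rintro _ ⟨_, ⟨j, rfl⟩, rfl⟩
  refine Ideal.subset_span ⟨j.castSucc, ?_⟩
  simp only [map_mul, rename_X, rename_castSucc_sum_X_Iic]

theorem rename_castSucc_mem_uIdeal {m : ℕ} {p : MvPolynomial (Fin m) (ZMod 2)}
    (hp : p ∈ uIdeal m) : rename Fin.castSucc p ∈ uIdeal (m + 1) :=
  map_rename_castSucc_uIdeal_le m (Ideal.mem_map_of_mem _ hp)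

noncomputable def uIdealSplitLast (m : ℕ) : Ideal (Polynomial (MvPolynomial (Fin m) (ZMod 2))) :=
  (uIdeal m).map Polynomial.C ⊔
    Ideal.span {Polynomial.X ^ 2 + Polynomial.C (∑ k, X k) * Polynomial.X}

theorem uIdeal_le_comap_splitLast (m : ℕ) :
    uIdeal (m + 1) ≤ (uIdealSplitLast m).comap (splitLast (ZMod 2) m) := by
  rw [uIdeal, Ideal.span_le]
  rintro _ ⟨j, rfl⟩
  induction j using Fin.lastCases with
  | last =>
    refine Ideal.mem_sup_right (Ideal.mem_span_singleton'.mpr ⟨1, ?_⟩)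
    simp only [map_mul, sum_X_Iic_last, map_add, splitLast_rename_castSucc, splitLast_X_last]
    ring
  | cast j =>
    refine Ideal.mem_sup_left ?_
    dsimp only
    rw [← rename_castSucc_sum_X_Iic, ← rename_X, ← map_mul, splitLast_rename_castSucc]
    exact Ideal.mem_map_of_mem _ (Ideal.subset_span ⟨j, rfl⟩)

section Quotient

open Ideal.Quotient

theorem mk_sum_X_add_mk_X_last_mul_eq_zero (m : ℕ) :
    (mk (uIdeal (m + 1)) (rename Fin.castSucc (∑ k, X k)) + mk _ (X (Fin.last m))) *
      mk _ (X (Fin.last m)) = 0 := by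
  rw [← map_add, ← map_mul, eq_zero_iff_mem, ← sum_X_Iic_last]
  exact Ideal.subset_span ⟨Fin.last m, rfl⟩

theorem mk_C_sum_X_add_mk_X_mul_eq_zero (m : ℕ) :
    (mk (uIdealSplitLast m) (Polynomial.C (∑ k, X k)) + mk _ Polynomial.X) * mk _ Polynomial.X =
      0 := by
  rw [← map_add, ← map_mul, eq_zero_iff_mem]
  refine Ideal.mem_sup_right (Ideal.mem_span_singleton'.mpr ⟨1, ?_⟩)
  ring

theorem mem_uIdeal_of_mk_splitLast_eq {m : ℕ} {f : MvPolynomial (Fin (m + 1)) (ZMod 2)}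
    (hf : f ∈ uIdeal (m + 1)) {p q : MvPolynomial (Fin m) (ZMod 2)}
    (h : mk (uIdealSplitLast m) (splitLast _ m f) =
      mk _ (Polynomial.C p + Polynomial.C q * Polynomial.X)) :
    p ∈ uIdeal m ∧ q ∈ uIdeal m := by
  have hmem : Polynomial.C p + Polynomial.C q * Polynomial.X ∈ uIdealSplitLast m := by
    rw [← eq_zero_iff_mem, ← h, eq_zero_iff_mem]
    exact uIdeal_le_comap_splitLast m hf
  exact Polynomial.mem_of_C_add_C_mul_X_mem_map_C_sup_span hmem

theorem sum_X_pow_succ_mem_uIdeal : ∀ m : ℕ, (∑ k : Fin m, X k) ^ (m + 1) ∈ uIdeal m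
  | 0 => by simp
  | m + 1 => by
    have hs : mk (uIdeal (m + 1)) (rename Fin.castSucc (∑ k, X k)) ^ (m + 1) = 0 := by
      rw [← map_pow, ← map_pow, eq_zero_iff_mem]
      exact rename_castSucc_mem_uIdeal (sum_X_pow_succ_mem_uIdeal m)
    rw [← eq_zero_iff_mem, sum_X_univ_succ, map_pow, map_add,
      add_pow_succ_of_add_mul_self_eq_zero (mk_sum_X_add_mk_X_last_mul_eq_zero m), hs, zero_mul]

theorem X_pow_add_two_mem_uIdeal : ∀ {n : ℕ} (i : Fin n), X i ^ (i.val + 2) ∈ uIdeal n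
  | n + 1, i => by
    induction i using Fin.lastCases with
    | last =>
      have hs : mk (uIdeal (n + 1)) (rename Fin.castSucc (∑ k, X k)) ^ (n + 1) = 0 := by
        rw [← map_pow, ← map_pow, eq_zero_iff_mem]
        exact rename_castSucc_mem_uIdeal (sum_X_pow_succ_mem_uIdeal n)
      rw [← eq_zero_iff_mem, Fin.val_last, map_pow,
        pow_succ_of_add_mul_self_eq_zero (mk_sum_X_add_mk_X_last_mul_eq_zero n),
        neg_pow (R := _ ⧸ uIdeal (n + 1)), hs, mul_zero, zero_mul]
    | cast i =>
      simpa using rename_castSucc_mem_uIdeal (X_pow_add_two_mem_uIdeal i)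

theorem sum_X_pow_self_notMem_uIdeal : ∀ m : ℕ, (∑ k : Fin m, X k) ^ m ∉ uIdeal m
  | 0 => by simp [uIdeal]
  | m + 1 => fun h => by
    refine sum_X_pow_self_notMem_uIdeal m (mem_uIdeal_of_mk_splitLast_eq h
      (p := (∑ k, X k) ^ (m + 1)) ?_).2
    rw [map_pow, splitLast_sum_X, map_pow, map_add,
      add_pow_succ_of_add_mul_self_eq_zero (Q := _ ⧸ uIdealSplitLast m)
        (mk_C_sum_X_add_mk_X_mul_eq_zero m)]
    simp only [map_add, map_mul, map_pow]
    ring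

theorem X_pow_add_one_notMem_uIdeal : ∀ {n : ℕ} (i : Fin n), X i ^ (i.val + 1) ∉ uIdeal n
  | n + 1, i => fun h => by
    induction i using Fin.lastCases with
    | last =>
      refine sum_X_pow_self_notMem_uIdeal n ?_
      rw [Fin.val_last] at h
      have := (mem_uIdeal_of_mk_splitLast_eq h (p := 0) (q := (-∑ k, X k) ^ n) ?_).2
      · rwa [CharTwo.neg_eq] at this
      rw [map_pow, splitLast_X_last, map_pow,
        pow_succ_of_add_mul_self_eq_zero (Q := _ ⧸ uIdealSplitLast n)
          (mk_C_sum_X_add_mk_X_mul_eq_zero n)]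
      simp only [map_mul, map_pow, map_neg, map_zero, zero_add]
    | cast i =>
      refine X_pow_add_one_notMem_uIdeal i (mem_uIdeal_of_mk_splitLast_eq h (q := 0) ?_).1
      simp

end Quotient

/-- In `R = ℤ₂[u₁,…,uₙ]/F`, one has `uᵢ^i ≠ 0` and `uᵢ^{i+1} = 0`
for every `i = 1,…,n` (here `i : Fin n` represents `u_{i+1}`). -/
theorem stmt9 (n : ℕ) (i : Fin n) :
    Ideal.Quotient.mk (uIdeal n) (X i ^ (i.val + 1)) ≠ 0 ∧
    Ideal.Quotient.mk (uIdeal n) (X i ^ (i.val + 2)) = 0 := by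
  rw [Ne, Ideal.Quotient.eq_zero_iff_mem, Ideal.Quotient.eq_zero_iff_mem]
  exact ⟨X_pow_add_one_notMem_uIdeal i, X_pow_add_two_mem_uIdeal i⟩
end

section
/- For natural numbers n ≥ 1 and 0 ≤ k ≤ n-1, let c(n,k) denote the number of monomials (counted with multiplicity over all choices) appearing in the degree-k component, after reduction by the relations t_1^2 = 0, t_j^2 = t_{j-1}t_j, of the product Π_{j=1}^{n-1}(1 + t_j + ⋯ + t_j^j) in Z_2[t_1,...,t_n]/G. Then the parities satisfy c(n+1, k) ≡ Σ_{i=0}^{k} c(n, i) (mod 2) for 1 ≤ k ≤ n-1. -/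
/-- `c n k`: the number of monomials, counted with multiplicity over all choices of one
term from each factor, in the degree-`k` component of
`∏_{j=1}^{n-1} (1 + tⱼ + ⋯ + tⱼ^j)`.  After reduction by the relations `t₁² = 0`,
`tⱼ² = tⱼ₋₁tⱼ`, each chosen term `∏ⱼ tⱼ^{sⱼ}` is a single monomial, so this count is
the number of tuples `(s₁,…,s_{n-1})` with `0 ≤ sⱼ ≤ j` and `∑ sⱼ = k`. -/
def c (n k : ℕ) : ℕ :=
  (Finset.univ.filter
    (fun s : (j : Fin (n - 1)) → Fin (j.val + 2) => ∑ j, (s j).val = k)).card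

/-! Splitting off the last factor `1 + tₙ + ⋯ + tₙ^n`: a tuple of total degree `k` whose first
`n - 1` entries sum to `i ≤ k` is a shorter tuple of degree `i` followed by the last entry
`k - i`, which is admissible because `k ≤ n`. Hence the recurrence holds already in `ℕ`. -/

open Finset

section BoundedTuples

variable {m : ℕ} (b : Fin (m + 1) → ℕ)

lemma sum_val_eq_sum_init_add_last (s : (j : Fin (m + 1)) → Fin (b j + 1)) :
    ∑ j, (s j : ℕ) = ∑ j : Fin m, (Fin.init s j : ℕ) + s (Fin.last m) :=
  Fin.sum_univ_castSucc _

lemma card_sum_eq_and_sum_init_eq {k i : ℕ} (hik : i ≤ k) (hk : k ≤ i + b (Fin.last m)) :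
    #{s : (j : Fin (m + 1)) → Fin (b j + 1) |
        ∑ j, (s j : ℕ) = k ∧ ∑ j : Fin m, (Fin.init s j : ℕ) = i} =
      #{t : (j : Fin m) → Fin (b j.castSucc + 1) | ∑ j, (t j : ℕ) = i} := by
  refine card_nbij' Fin.init (fun t => Fin.snoc t ⟨k - i, by omega⟩) ?_ ?_ ?_ ?_
  · intro s hs
    simp_all
  · intro t ht
    simp_all [sum_val_eq_sum_init_add_last]
  · intro s hs
    simp only [coe_filter, Set.mem_ofPred_eq, mem_univ, true_and] at hs
    have hlast : s (Fin.last m) = ⟨k - i, by omega⟩ := by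
      ext
      have := sum_val_eq_sum_init_add_last b s
      simp only
      omega
    rw [← hlast]
    exact Fin.snoc_init_self s
  · intro t _
    exact Fin.init_snoc _ _

lemma card_sum_eq_eq_sum_card_init {k : ℕ} (hk : k ≤ b (Fin.last m)) :
    #{s : (j : Fin (m + 1)) → Fin (b j + 1) | ∑ j, (s j : ℕ) = k} =
      ∑ i ∈ range (k + 1),
        #{t : (j : Fin m) → Fin (b j.castSucc + 1) | ∑ j, (t j : ℕ) = i} := by
  rw [card_eq_sum_card_fiberwise (f := fun s => ∑ j : Fin m, (Fin.init s j : ℕ))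
    (t := range (k + 1))]
  · refine sum_congr rfl fun i hi => ?_
    rw [filter_filter]
    exact card_sum_eq_and_sum_init_eq b (by simpa [Nat.lt_succ_iff] using hi) (by omega)
  · intro s hs
    have := sum_val_eq_sum_init_add_last b s
    simp only [coe_filter, mem_univ, true_and, Set.mem_ofPred_eq, coe_range, Set.mem_Iio,
      Order.lt_add_one_iff] at hs ⊢
    omega

end BoundedTuples

lemma c_succ_eq_sum_range {n k : ℕ} (hk : k ≤ n) :
    c (n + 1) k = ∑ i ∈ range (k + 1), c n i := by
  rcases n with _ | m
  · obtain rfl : k = 0 := by omega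
    rfl
  · exact card_sum_eq_eq_sum_card_init (fun j : Fin (m + 1) => j.val + 1) (by simpa using hk)

theorem stmt15_general (n k : ℕ) (hk : k ≤ n - 1) :
    c (n + 1) k ≡ ∑ i ∈ Finset.range (k + 1), c n i [MOD 2] := by
  rw [c_succ_eq_sum_range (by omega)]

/-- the parities satisfy `c (n+1) k ≡ ∑_{i=0}^k c n i (mod 2)`
for `1 ≤ k ≤ n - 1`. -/
theorem stmt15 (n k : ℕ) (hn : 1 ≤ n) (hk1 : 1 ≤ k) (hk : k ≤ n - 1) :
    c (n + 1) k ≡ ∑ i ∈ Finset.range (k + 1), c n i [MOD 2] :=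
  stmt15_general n k hk
end
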